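/- Let S ∈ 𝒮^T satisfy limsup_{n→+∞} S n = sup_{n∈ℤ} S n. Then for every n ∈ ℤ the set {(T S) m : m ≥ n} is bounded below and inf_{m ≥ n} (T S) m = M n − 2 M 0; equivalently (T S) n − inf_{m ≥ n} (T S) m = M n − S n = W n. Dually, if S ∈ 𝒮^{T⁻¹} satisfies liminf_{n→−∞} S n = inf_{n∈ℤ} S n, then for every n ∈ ℤ, sup_{m ≤ n} (T⁻¹ S) m = I n − 2 I 0, and sup_{m ≤ n} (T⁻¹ S) m − (T⁻¹ S) n = S n − I n = V n. -/

import Mathlib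

/-!
For `m ≥ n` we have `S m ≤ M m` and `M n ≤ M m`, so `(T S) m = 2 M m - S m - 2 M 0 ≥ M n - 2 M 0`.
The limsup hypothesis makes `S` climb back to the level `M n` after time `n`; since `S` goes up
by unit steps, at the first such time `m` we have `S m = M m = M n`, and there the bound is
attained. The dual statement is the first one for the reflected path `n ↦ -S (-n)`, which turns
`I` into `-M` and `T⁻¹` into `T`.
-/

/-- The past maximum `M n = sup_{m ≤ n} S m` of a two-sided path. -/
noncomputable def ballMax (S : ℤ → ℤ) (n : ℤ) : ℤ := sSup (S '' Set.Iic n)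

/-- The future minimum `I n = inf_{m ≥ n} S m` of a two-sided path. -/
noncomputable def ballMin (S : ℤ → ℤ) (n : ℤ) : ℤ := sInf (S '' Set.Ici n)

/-- Pitman's transform `(TS) n = 2 M n - S n - 2 M 0`. -/
noncomputable def Tbb (S : ℤ → ℤ) : ℤ → ℤ := fun n => 2 * ballMax S n - S n - 2 * ballMax S 0

/-- The inverse transform `(T⁻¹S) n = 2 I n - S n - 2 I 0`. -/
noncomputable def TbbInv (S : ℤ → ℤ) : ℤ → ℤ := fun n => 2 * ballMin S n - S n - 2 * ballMin S 0

/-- `S ∈ 𝒮⁰`: a two-sided nearest-neighbour path started at `0`. -/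
def inS0 (S : ℤ → ℤ) : Prop := S 0 = 0 ∧ ∀ n : ℤ, |S n - S (n - 1)| = 1

/-- `limsup_{n → +∞} S n = sup_{n ∈ ℤ} S n`, as elements of `ℤ ∪ {+∞}` (via `EReal`). -/
def limsupEq (S : ℤ → ℤ) : Prop :=
  Filter.limsup (fun n : ℤ => ((S n : ℝ) : EReal)) Filter.atTop = ⨆ n : ℤ, ((S n : ℝ) : EReal)

/-- `liminf_{n → -∞} S n = inf_{n ∈ ℤ} S n`, as elements of `ℤ ∪ {-∞}` (via `EReal`). -/
def liminfEq (S : ℤ → ℤ) : Prop :=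
  Filter.liminf (fun n : ℤ => ((S n : ℝ) : EReal)) Filter.atBot = ⨅ n : ℤ, ((S n : ℝ) : EReal)

open Set Filter

lemma Int.sSup_neg (s : Set ℤ) : sSup (-s) = -sInf s := by
  rcases s.eq_empty_or_nonempty with rfl | hne
  · simp
  by_cases hs : BddBelow s
  · exact csSup_neg hne hs
  · rw [csSup_of_not_bddAbove (bddAbove_neg.not.mpr hs), csInf_of_not_bddBelow hs]
    simp

lemma IsLeast.neg {α : Type*} [AddCommGroup α] [PartialOrder α] [IsOrderedAddMonoid α]
    {s : Set α} {a : α} (h : IsLeast s a) : IsGreatest (-s) (-a) :=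
  ⟨neg_mem_neg.mpr h.1, fun _ hx => le_neg_of_le_neg (h.2 hx)⟩

lemma frequently_le_of_limsup_eq_iSup {ι : Type*} {l : Filter ι} {f : ι → ℤ}
    (h : limsup (fun i => ((f i : ℝ) : EReal)) l = ⨆ i, ((f i : ℝ) : EReal)) (j : ι) :
    ∃ᶠ i in l, f j ≤ f i := by
  by_contra hj
  rw [not_frequently] at hj
  have : ((f j : ℝ) : EReal) ≤ ((f j - 1 : ℤ) : ℝ) :=
    calc ((f j : ℝ) : EReal) ≤ ⨆ i, ((f i : ℝ) : EReal) := le_iSup (fun i => ((f i : ℝ) : EReal)) j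
      _ = limsup (fun i => ((f i : ℝ) : EReal)) l := h.symm
      _ ≤ ((f j - 1 : ℤ) : ℝ) :=
        limsup_le_of_le (by isBoundedDefault) (hj.mono fun i hi => by norm_cast; omega)
  norm_cast at this
  omega

lemma frequently_ge_of_liminf_eq_iInf {ι : Type*} {l : Filter ι} {f : ι → ℤ}
    (h : liminf (fun i => ((f i : ℝ) : EReal)) l = ⨅ i, ((f i : ℝ) : EReal)) (j : ι) :
    ∃ᶠ i in l, f i ≤ f j := by
  by_contra hj
  rw [not_frequently] at hj
  have : ((f j + 1 : ℤ) : ℝ) ≤ ((f j : ℝ) : EReal) :=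
    calc (((f j + 1 : ℤ) : ℝ) : EReal) ≤ liminf (fun i => ((f i : ℝ) : EReal)) l :=
        le_liminf_of_le (by isBoundedDefault) (hj.mono fun i hi => by norm_cast; omega)
      _ = ⨅ i, ((f i : ℝ) : EReal) := h
      _ ≤ ((f j : ℝ) : EReal) := iInf_le (fun i => ((f i : ℝ) : EReal)) j
  norm_cast at this
  omega

lemma exists_first_hit {S : ℤ → ℤ} (hstep : ∀ k, S k ≤ S (k - 1) + 1) {n m₀ a : ℤ}
    (hn : S n ≤ a) (hm₀ : a ≤ S m₀) (hnm₀ : n ≤ m₀) :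
    ∃ m, n ≤ m ∧ S m = a ∧ ∀ k, n ≤ k → k ≤ m → S k ≤ a := by
  obtain ⟨m, ⟨hnm, ham⟩, hmin⟩ := Int.exists_least_of_bdd
    (P := fun m => n ≤ m ∧ a ≤ S m) ⟨n, fun _ hz => hz.1⟩ ⟨m₀, hnm₀, hm₀⟩
  have before : ∀ k, n ≤ k → k < m → S k < a := fun k hnk hkm =>
    lt_of_not_ge fun hak => (hmin k ⟨hnk, hak⟩).not_gt hkm
  have hma : S m ≤ a := by
    rcases hnm.eq_or_lt with rfl | hlt
    · exact hn
    · have := before (m - 1) (by omega) (by omega)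
      linarith [hstep m]
  refine ⟨m, hnm, le_antisymm hma ham, fun k hnk hkm => ?_⟩
  rcases hkm.eq_or_lt with rfl | hlt
  · exact hma
  · exact (before k hnk hlt).le

section PastMaximum

variable {S : ℤ → ℤ}

lemma bddAbove_image_Iic (hB : BddAbove (S '' Iic 0)) (n : ℤ) : BddAbove (S '' Iic n) := by
  have : S '' Iic n ⊆ S '' Iic 0 ∪ S '' Icc 0 n := by
    rintro _ ⟨m, hm, rfl⟩
    rcases le_or_gt m 0 with h | h
    · exact Or.inl ⟨m, h, rfl⟩
    · exact Or.inr ⟨m, ⟨h.le, hm⟩, rfl⟩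
  exact (hB.union ((finite_Icc 0 n).image S).bddAbove).mono this

lemma le_ballMax (hB : BddAbove (S '' Iic 0)) {m n : ℤ} (h : m ≤ n) : S m ≤ ballMax S n :=
  le_csSup (bddAbove_image_Iic hB n) ⟨m, h, rfl⟩

lemma ballMax_le {n c : ℤ} (h : ∀ m ≤ n, S m ≤ c) : ballMax S n ≤ c :=
  csSup_le ⟨S n, n, mem_Iic.mpr le_rfl, rfl⟩ (by rintro _ ⟨m, hm, rfl⟩; exact h m hm)

lemma ballMax_mono (hB : BddAbove (S '' Iic 0)) {m n : ℤ} (h : m ≤ n) :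
    ballMax S m ≤ ballMax S n :=
  ballMax_le fun _ hk => le_ballMax hB (hk.trans h)

lemma exists_eq_ballMax (hB : BddAbove (S '' Iic 0)) (n : ℤ) : ∃ j ≤ n, S j = ballMax S n := by
  obtain ⟨j, hj, hSj⟩ := Int.csSup_mem (s := S '' Iic n) ⟨S n, n, mem_Iic.mpr le_rfl, rfl⟩
    (bddAbove_image_Iic hB n)
  exact ⟨j, hj, hSj⟩

end PastMaximum

theorem isLeast_Tbb_image_Ici {S : ℤ → ℤ} (hstep : ∀ k, S k ≤ S (k - 1) + 1)
    (hB : BddAbove (S '' Iic 0)) (hrec : ∀ j, ∃ᶠ m in atTop, S j ≤ S m) (n : ℤ) :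
    IsLeast (Tbb S '' Ici n) (ballMax S n - 2 * ballMax S 0) := by
  constructor
  · -- `TS` attains `M n - 2 M 0` when `S` first climbs back to its past maximum `M n`.
    obtain ⟨j, -, hj⟩ := exists_eq_ballMax hB n
    obtain ⟨m₀, hnm₀, hm₀⟩ := (hrec j).forall_exists_of_atTop n
    obtain ⟨m, hnm, hSm, hbelow⟩ :=
      exists_first_hit hstep (le_ballMax hB le_rfl) (hj ▸ hm₀) hnm₀
    have hMm : ballMax S m = ballMax S n := by
      refine le_antisymm (ballMax_le fun k hk => ?_) (ballMax_mono hB hnm)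
      rcases le_total k n with hkn | hnk
      · exact le_ballMax hB hkn
      · exact hbelow k hnk hk
    refine ⟨m, hnm, ?_⟩
    simp only [Tbb, hMm, hSm]
    ring
  · rintro _ ⟨m, hnm, rfl⟩
    have := le_ballMax hB (le_refl m)
    have := ballMax_mono hB hnm
    simp only [Tbb]
    omega

def reflect (S : ℤ → ℤ) : ℤ → ℤ := fun n => -S (-n)

lemma image_reflect (S : ℤ → ℤ) (s : Set ℤ) : reflect S '' s = -(S '' (-s)) := by
  ext x
  simp only [reflect, mem_image, Set.mem_neg]
  constructor
  · rintro ⟨m, hm, rfl⟩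
    exact ⟨-m, by simpa using hm, by simp⟩
  · rintro ⟨m, hm, hmx⟩
    exact ⟨-m, hm, by simp [hmx]⟩

lemma ballMax_reflect (S : ℤ → ℤ) (n : ℤ) : ballMax (reflect S) n = -ballMin S (-n) := by
  rw [ballMax, ballMin, image_reflect, neg_Iic, Int.sSup_neg]

lemma TbbInv_eq_reflect_Tbb_reflect (S : ℤ → ℤ) : TbbInv S = reflect (Tbb (reflect S)) := by
  ext n
  simp only [TbbInv, reflect, Tbb, ballMax_reflect, neg_neg, neg_zero]
  ring

lemma reflect_step {S : ℤ → ℤ} (hstep : ∀ k, S k ≤ S (k - 1) + 1) (k : ℤ) :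
    reflect S k ≤ reflect S (k - 1) + 1 := by
  have := hstep (1 - k)
  rw [sub_sub_cancel_left] at this
  simp only [reflect, neg_sub]
  linarith

theorem isGreatest_TbbInv_image_Iic {S : ℤ → ℤ} (hstep : ∀ k, S k ≤ S (k - 1) + 1)
    (hB : BddBelow (S '' Ici 0)) (hrec : ∀ j, ∃ᶠ m in atBot, S m ≤ S j) (n : ℤ) :
    IsGreatest (TbbInv S '' Iic n) (ballMin S n - 2 * ballMin S 0) := by
  have hB' : BddAbove (reflect S '' Iic 0) := by
    rwa [image_reflect, bddAbove_neg, neg_Iic, neg_zero]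
  have hrec' : ∀ j, ∃ᶠ m in atTop, reflect S j ≤ reflect S m := by
    intro j
    rw [frequently_atTop]
    intro a
    obtain ⟨m, hma, hm⟩ := (hrec (-j)).forall_exists_of_atBot (-a)
    exact ⟨-m, by omega, by simpa [reflect] using hm⟩
  have h := (isLeast_Tbb_image_Ici (reflect_step hstep) hB' hrec' (-n)).neg
  have hval : -(ballMax (reflect S) (-n) - 2 * ballMax (reflect S) 0) =
      ballMin S n - 2 * ballMin S 0 := by
    simp only [ballMax_reflect, neg_neg, neg_zero]
    ring
  rwa [← neg_Iic, ← image_reflect, ← TbbInv_eq_reflect_Tbb_reflect, hval] at h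

lemma inS0.step_le {S : ℤ → ℤ} (hS : inS0 S) (k : ℤ) : S k ≤ S (k - 1) + 1 := by
  linarith [(abs_le.mp (hS.2 k).le).2]

/-- For `S ∈ 𝒮^T` with `limsup_{n→+∞} S n = sup_n S n`, the future minimum
of `TS` equals `M - 2 M 0`, so `TS - I^{TS} = M - S = W`; dually for `S ∈ 𝒮^{T⁻¹}` with
`liminf_{n→-∞} S n = inf_n S n`, the past maximum of `T⁻¹S` equals `I - 2 I 0`, so
`M^{T⁻¹S} - T⁻¹S = S - I = V`. -/
theorem stmt_7 :
    (∀ S : ℤ → ℤ, inS0 S → BddAbove (S '' Set.Iic 0) → limsupEq S →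
      ∀ n : ℤ, BddBelow (Tbb S '' Set.Ici n) ∧
        sInf (Tbb S '' Set.Ici n) = ballMax S n - 2 * ballMax S 0 ∧
        Tbb S n - sInf (Tbb S '' Set.Ici n) = ballMax S n - S n) ∧
    (∀ S : ℤ → ℤ, inS0 S → BddBelow (S '' Set.Ici 0) → liminfEq S →
      ∀ n : ℤ, BddAbove (TbbInv S '' Set.Iic n) ∧
        sSup (TbbInv S '' Set.Iic n) = ballMin S n - 2 * ballMin S 0 ∧
        sSup (TbbInv S '' Set.Iic n) - TbbInv S n = S n - ballMin S n) := by
  constructor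
  · intro S hS hB hL n
    have h := isLeast_Tbb_image_Ici hS.step_le hB (frequently_le_of_limsup_eq_iSup hL) n
    refine ⟨h.bddBelow, h.csInf_eq, ?_⟩
    rw [h.csInf_eq, Tbb]
    ring
  · intro S hS hB hL n
    have h := isGreatest_TbbInv_image_Iic hS.step_le hB (frequently_ge_of_liminf_eq_iInf hL) n
    refine ⟨h.bddAbove, h.csSup_eq, ?_⟩
    rw [h.csSup_eq, TbbInv]
    ring
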